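/- For integers k ≥ 2 and n ≥ 0, F(k,n) equals the number of tilings of a 1×(n+1) board using 1×1 white squares, 1×1 black squares, and 1×k gray rectangles such that there is exactly one black square and it appears in one of the first k positions. -/

import Mathlib

def genFib (k n : ℕ) : ℕ :=
  if h1 : n < k then n + 1
  else if h2 : k = 0 then 0
  else genFib k (n - 1) + genFib k (n - k)
  termination_by n
  decreasing_by all_goals omega

def genLucas (k n : ℕ) : ℕ :=
  if n < 2 * k then n + 1
  else (k - 1) * genFib k (n - (2 * k - 1)) + genFib k (n - (k - 1))

inductive Piece
  | white
  | black
  | gray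
  deriving DecidableEq

def pieceLen (k : ℕ) : Piece → ℕ
  | .white => 1
  | .black => 1
  | .gray => k

/-!
Classify a tiling by its last piece. On a board of more than `k` cells the black square, lying in
the first `k` cells, is not last, so removing the last piece (white or gray) gives the recurrence
`F(k,n) = F(k,n-1) + F(k,n-k)`. On a board of at most `k` cells a gray rectangle does not fit next
to the black square, so the tiling is white except for the black square, which may sit in any
cell: `n + 1` tilings.
-/

instance : Fintype Piece :=
  ⟨{.white, .black, .gray}, fun p => by cases p <;> simp⟩

namespace Piece

def tilingLength (k : ℕ) (l : List Piece) : ℕ := (l.map (pieceLen k)).sum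

def BlackInFirst (k : ℕ) (l : List Piece) : Prop :=
  ∃ l₁ l₂, l = l₁ ++ black :: l₂ ∧ tilingLength k l₁ < k

def blackTilings (k m : ℕ) : Set (List Piece) :=
  {l | tilingLength k l = m ∧ l.count black = 1 ∧ BlackInFirst k l}

variable {k m : ℕ} {l : List Piece} {p : Piece}

@[simp] lemma tilingLength_nil : tilingLength k [] = 0 := rfl

@[simp] lemma tilingLength_cons : tilingLength k (p :: l) = pieceLen k p + tilingLength k l :=
  List.sum_cons

@[simp] lemma tilingLength_append (l₁ l₂ : List Piece) :
    tilingLength k (l₁ ++ l₂) = tilingLength k l₁ + tilingLength k l₂ := by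
  simp [tilingLength]

@[simp] lemma tilingLength_replicate_white (j : ℕ) :
    tilingLength k (List.replicate j white) = j := by
  simp [tilingLength, pieceLen]

lemma length_le_tilingLength (hk : 0 < k) (l : List Piece) : l.length ≤ tilingLength k l := by
  induction l with
  | nil => simp
  | cons p l ih => cases p <;> simp only [List.length_cons, tilingLength_cons, pieceLen] <;> omega

lemma finite_blackTilings (hk : 0 < k) (m : ℕ) : (blackTilings k m).Finite :=
  (List.finite_length_le Piece m).subset fun l hl => hl.1 ▸ length_le_tilingLength hk l

lemma eq_replicate_white_of_count_black_eq_zero (h₀ : l.count black = 0)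
    (hl : tilingLength k l < k) :
    l = List.replicate (tilingLength k l) white := by
  induction l with
  | nil => rfl
  | cons p l ih =>
    cases p with
    | white =>
      simp only [tilingLength_cons, pieceLen] at hl ⊢
      rw [add_comm, List.replicate_succ, ← ih (by simpa using h₀) (by omega)]
    | black => simp at h₀
    | gray => simp [pieceLen] at hl

lemma blackTilings_eq_range (hm : m ≤ k) :
    blackTilings k m = Set.range fun j : Fin m =>
      List.replicate j white ++ black :: List.replicate (m - 1 - j) white := by
  ext l
  constructor
  · rintro ⟨hlen, hcount, l₁, l₂, rfl, hl₁⟩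
    simp only [List.count_append, List.count_cons_self] at hcount
    simp only [tilingLength_append, tilingLength_cons, pieceLen] at hlen
    have h₁ := eq_replicate_white_of_count_black_eq_zero (by omega) hl₁
    have h₂ :=
      eq_replicate_white_of_count_black_eq_zero (k := k) (l := l₂) (by omega) (by omega)
    refine ⟨⟨tilingLength k l₁, by omega⟩, ?_⟩
    show _ ++ black :: List.replicate (m - 1 - tilingLength k l₁) white = _
    rw [show m - 1 - tilingLength k l₁ = tilingLength k l₂ by omega]
    conv_rhs => rw [h₁, h₂]
  · rintro ⟨j, rfl⟩
    refine ⟨?_, ?_, _, _, rfl, ?_⟩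
    · simp only [tilingLength_append, tilingLength_replicate_white, tilingLength_cons, pieceLen]
      omega
    · simp [List.count_append, List.count_replicate]
    · rw [tilingLength_replicate_white]
      omega

lemma ncard_blackTilings_of_le (hm : m ≤ k) : (blackTilings k m).ncard = m := by
  rw [blackTilings_eq_range hm, Set.ncard_range_of_injective, Nat.card_fin]
  intro i j hij
  have := (List.append_cons_inj_of_notMem (by simp) (by simp)).1 hij
  exact Fin.ext (by simpa using congrArg List.length this.1)

lemma blackInFirst_append_singleton (hp : p ≠ black) :
    BlackInFirst k (l ++ [p]) ↔ BlackInFirst k l := by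
  constructor
  · rintro ⟨l₁, l₂, h, hl₁⟩
    obtain rfl | ⟨l₂, q, rfl⟩ := l₂.eq_nil_or_concat'
    · simp_all
    · rw [← List.cons_append, ← List.append_assoc] at h
      exact ⟨l₁, l₂, (List.append_inj' h rfl).1, hl₁⟩
  · rintro ⟨l₁, l₂, rfl, hl₁⟩
    exact ⟨l₁, l₂ ++ [p], by simp, hl₁⟩

lemma append_singleton_mem_blackTilings (hp : p ≠ black) (hm : pieceLen k p ≤ m) :
    l ++ [p] ∈ blackTilings k m ↔ l ∈ blackTilings k (m - pieceLen k p) := by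
  simp only [blackTilings, Set.mem_ofPred_eq, tilingLength_append, tilingLength_cons,
    tilingLength_nil, add_zero, List.count_append, List.count_singleton, beq_iff_eq, hp,
    if_false, blackInFirst_append_singleton hp, eq_tsub_iff_add_eq_of_le hm]

lemma append_black_notMem_blackTilings (hkm : k < m) : l ++ [black] ∉ blackTilings k m := by
  rintro ⟨hlen, hcount, l₁, l₂, h, hl₁⟩
  have hl : black ∉ l := List.count_eq_zero.1 (by simpa [List.count_append] using hcount)
  obtain ⟨rfl, -, -⟩ := (List.append_cons_inj_of_notMem hl List.not_mem_nil).1 h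
  simp only [tilingLength_append, tilingLength_cons, pieceLen, tilingLength_nil] at hlen
  omega

lemma blackTilings_eq_union (hkm : k < m) :
    blackTilings k m =
      (· ++ [white]) '' blackTilings k (m - 1) ∪ (· ++ [gray]) '' blackTilings k (m - k) := by
  ext l
  obtain rfl | ⟨l, p, rfl⟩ := l.eq_nil_or_concat'
  · simp [blackTilings]
  · cases p with
    | white =>
      simpa [pieceLen] using
        append_singleton_mem_blackTilings (l := l) (p := white) nofun (Nat.one_le_of_lt hkm)
    | black => simpa using append_black_notMem_blackTilings hkm
    | gray =>
      simpa [pieceLen] using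
        append_singleton_mem_blackTilings (l := l) (p := gray) nofun hkm.le

lemma ncard_blackTilings_of_lt (hk : 0 < k) (hkm : k < m) :
    (blackTilings k m).ncard =
      (blackTilings k (m - 1)).ncard + (blackTilings k (m - k)).ncard := by
  have hdisj : Disjoint ((· ++ [white]) '' blackTilings k (m - 1))
      ((· ++ [gray]) '' blackTilings k (m - k)) := by
    refine Set.disjoint_left.2 ?_
    rintro _ ⟨l, -, rfl⟩ ⟨l', -, h⟩
    simp at h
  rw [blackTilings_eq_union hkm, Set.ncard_union_eq hdisj ((finite_blackTilings hk _).image _)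
      ((finite_blackTilings hk _).image _),
    Set.ncard_image_of_injective _ (List.append_left_injective _),
    Set.ncard_image_of_injective _ (List.append_left_injective _)]

end Piece

lemma genFib_of_lt {k n : ℕ} (hn : n < k) : genFib k n = n + 1 := by
  rw [genFib, dif_pos hn]

lemma genFib_of_le {k n : ℕ} (hk : 0 < k) (hn : k ≤ n) :
    genFib k n = genFib k (n - 1) + genFib k (n - k) := by
  rw [genFib, dif_neg (by omega), dif_neg (by omega)]

theorem stmt13 (k n : ℕ) (hk : 2 ≤ k) :
    genFib k n = Nat.card {l : List Piece //
      (l.map (pieceLen k)).sum = n + 1 ∧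
      l.count Piece.black = 1 ∧
      ∃ l₁ l₂, l = l₁ ++ Piece.black :: l₂ ∧ (l₁.map (pieceLen k)).sum < k} := by
  change genFib k n = Nat.card (Piece.blackTilings k (n + 1))
  rw [Nat.card_coe_set_eq]
  induction n using Nat.strong_induction_on with
  | _ n ih =>
    rcases lt_or_ge n k with hn | hn
    · rw [genFib_of_lt hn, Piece.ncard_blackTilings_of_le hn]
    · rw [genFib_of_le (by omega) hn, Piece.ncard_blackTilings_of_lt (by omega) (by omega),
        ih (n - 1) (by omega), ih (n - k) (by omega), Nat.sub_add_cancel (by omega),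
        Nat.sub_add_comm hn, Nat.add_sub_cancel]
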